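/- arXiv:0708.4264 — 2 statements merged into one kernel-verified Lean document; each statement's English description precedes it below -/
import Mathlib

section
/- Let a > 0, b > 0, c ∈ ℝ with μ := b²/4 − c < 0, and let λ₂(p) = −b/2 + √(μ − ap), using the branch of the square root with nonnegative real part. Then there exist δ > 0 and ω* > 0 such that Re λ₂(iω) > δ for all real ω with |ω| ≥ ω*. -/
/-! Since `Re √z = √((|z| + Re z)/2)` and `|z| ≥ |Im z|`, the real part of
`λ₂(iω) = -b/2 + √(μ - iaω)` is at least `-b/2 + √((a|ω| + μ)/2)`, which tends to `+∞`
as `|ω| → ∞`; so it eventually exceeds any `δ`. -/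

open MeasureTheory Filter Set Complex ENNReal

noncomputable section

def Cplus : Set ℂ := {p : ℂ | 0 < p.re}

def sqrtB (z : ℂ) : ℂ := z ^ (1/2 : ℂ)

def lam1 (a b c : ℝ) (p : ℂ) : ℂ :=
  -(b/2 : ℝ) - sqrtB (((b^2/4 - c : ℝ) : ℂ) - (a : ℂ) * p)

def lam2 (a b c : ℝ) (p : ℂ) : ℂ :=
  -(b/2 : ℝ) + sqrtB (((b^2/4 - c : ℝ) : ℂ) - (a : ℂ) * p)

def MemHinf (h : ℂ → ℂ) : Prop :=
  DifferentiableOn ℂ h Cplus ∧ ∃ M : ℝ, ∀ p ∈ Cplus, ‖h p‖ ≤ M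

def eH2Norm (h : ℂ → ℂ) : ℝ≥0∞ :=
  ⨆ k ∈ Set.Ioi (0:ℝ), eLpNorm (fun ω : ℝ => h ((k : ℂ) + (ω : ℂ) * I)) 2 volume

def MemH2 (h : ℂ → ℂ) : Prop :=
  DifferentiableOn ℂ h Cplus ∧ eH2Norm h < ⊤

theorem sqrtB_re (z : ℂ) : (sqrtB z).re = √((‖z‖ + z.re) / 2) := by
  rw [sqrtB, one_div, cpow_inv_two_re]

theorem sqrt_abs_im_add_re_le_sqrtB_re (z : ℂ) :
    √((|z.im| + z.re) / 2) ≤ (sqrtB z).re := by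
  rw [sqrtB_re]
  gcongr
  exact abs_im_le_norm z

theorem le_lam2_re_mul_I (a b c ω : ℝ) :
    -(b / 2) + √((|a * ω| + (b ^ 2 / 4 - c)) / 2) ≤ (lam2 a b c (ω * I)).re := by
  have h := sqrt_abs_im_add_re_le_sqrtB_re (((b ^ 2 / 4 - c : ℝ) : ℂ) - (a : ℂ) * (ω * I))
  simp only [sub_im, sub_re, ofReal_im, ofReal_re, mul_im, mul_re, I_re, I_im,
    zero_sub, abs_neg] at h
  simpa [lam2] using h

theorem tendsto_lam2_re_mul_I {a : ℝ} (ha : a ≠ 0) (b c : ℝ) :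
    Tendsto (fun ω : ℝ => (lam2 a b c (ω * I)).re) (comap (|·|) atTop) atTop := by
  refine tendsto_atTop_mono (le_lam2_re_mul_I a b c) ?_
  have habs : Tendsto (fun ω : ℝ => |a * ω|) (comap (|·|) atTop) atTop := by
    simpa only [abs_mul] using tendsto_comap.const_mul_atTop (abs_pos.2 ha)
  exact tendsto_atTop_add_const_left _ _ <| Real.tendsto_sqrt_atTop.comp <|
    (tendsto_atTop_add_const_right _ _ habs).atTop_div_const two_pos

theorem lam2_re_pos_on_axis_general
    (a b c : ℝ) (ha : 0 < a) :
    ∃ δ > (0:ℝ), ∃ ωstar > (0:ℝ), ∀ ω : ℝ, ωstar ≤ |ω| →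
      δ < (lam2 a b c ((ω : ℂ) * I)).re := by
  obtain ⟨R, hR⟩ := eventually_atTop.1 <| eventually_comap.1 <|
    (tendsto_lam2_re_mul_I ha.ne' b c).eventually_gt_atTop 1
  refine ⟨1, one_pos, max R 1, by positivity, fun ω hω => hR |ω| ?_ ω rfl⟩
  exact le_of_max_le_left hω

/-- There exist `δ > 0` and `ω* > 0` such that `Re λ₂(iω) > δ` for all real `ω`
with `|ω| ≥ ω*`. -/
theorem lam2_re_pos_on_axis
    (a b c : ℝ) (ha : 0 < a) (hb : 0 < b) (hmu : b ^ 2 / 4 - c < 0) :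
    ∃ δ > (0:ℝ), ∃ ωstar > (0:ℝ), ∀ ω : ℝ, ωstar ≤ |ω| →
      δ < (lam2 a b c ((ω : ℂ) * I)).re :=
  lam2_re_pos_on_axis_general a b c ha
end
end

section
/- Let a > 0, b > 0, c ∈ ℝ with b²/4 < c, let k₀, k₁ ∈ ℝ with k₀² + k₁² > 0 and k₀k₁ ≤ 0, and let λ₁(p) = −b/2 − √(b²/4 − c − ap) on ℂ⁺ with the branch Re √ ≥ 0. For G ∈ H² with pG(p) ∈ H², define U(x,p) = e^{λ₁(p)x}(k₀ + k₁λ₁(p))⁻¹G(p). Then there is a constant C₁ = C₁(a,b,c,k₀,k₁) such that for m = 0 and m = 1: (∫₀^∞ ‖p^m U(x,·)‖²_{H²} dx)^{1/2} ≤ C₁ ‖p^m G(p)‖_{H²}. -/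
open MeasureTheory Filter Set Complex ENNReal

noncomputable section

/-!
The principal square root has nonnegative real part, so `Re λ₁(p) ≤ -b/2` for every `p`. Hence
`|e^{λ₁(p)x}| ≤ e^{-bx/2}`, and since `k₀k₁ ≤ 0` also `|k₀ + k₁λ₁(p)| ≥ |k₀| + |k₁|b/2 > 0`. The
multiplier `e^{λ₁x}(k₀ + k₁λ₁)⁻¹` is therefore bounded by `C e^{-bx/2}` uniformly in `p`, which
bounds each `H²` norm, and `∫₀^∞ e^{-bx} dx = 1/b`.
-/

lemma re_sqrtB_nonneg (z : ℂ) : 0 ≤ (sqrtB z).re := by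
  unfold sqrtB
  rcases eq_or_ne z 0 with rfl | hz
  · simp [Complex.zero_cpow]
  · rw [Complex.cpow_def_of_ne_zero hz, Complex.exp_re]
    have him : (Complex.log z * (1/2 : ℂ)).im = z.arg / 2 := by
      simp [Complex.mul_im, Complex.log_im, div_eq_mul_inv]
    rw [him]
    have h₁ := Complex.neg_pi_lt_arg z
    have h₂ := Complex.arg_le_pi z
    exact mul_nonneg (Real.exp_nonneg _)
      (Real.cos_nonneg_of_mem_Icc ⟨by linarith, by linarith⟩)

lemma re_lam1_le (a b c : ℝ) (p : ℂ) : (lam1 a b c p).re ≤ -(b / 2) := by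
  have := re_sqrtB_nonneg (((b^2/4 - c : ℝ) : ℂ) - (a : ℂ) * p)
  simp only [lam1, Complex.sub_re, Complex.neg_re, Complex.ofReal_re]
  linarith

/-- With `k₀k₁ ≤ 0`, both terms of `Re (k₀ + k₁z) = k₀ + k₁ Re z` push in the same direction. -/
lemma abs_add_abs_mul_le_norm_add_mul {k₀ k₁ β : ℝ} (hk : k₀ * k₁ ≤ 0) {z : ℂ}
    (hz : z.re ≤ -β) : |k₀| + |k₁| * β ≤ ‖(k₀ : ℂ) + k₁ * z‖ := by
  have hre : ((k₀ : ℂ) + k₁ * z).re = k₀ + k₁ * z.re := by simp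
  refine le_trans ?_ (Complex.abs_re_le_norm _)
  rw [hre, le_abs]
  rcases abs_cases k₀ with ⟨h₀, hk₀⟩ | ⟨h₀, hk₀⟩ <;>
  rcases abs_cases k₁ with ⟨h₁, hk₁⟩ | ⟨h₁, hk₁⟩ <;> rw [h₀, h₁]
  · rcases hk₀.eq_or_lt with rfl | hk₀
    · right; nlinarith
    · obtain rfl : k₁ = 0 := by nlinarith
      left; simp
  · left; nlinarith
  · right; nlinarith
  · nlinarith

lemma norm_exp_mul_ofReal_le {z : ℂ} {β x : ℝ} (hz : z.re ≤ -β) (hx : 0 ≤ x) :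
    ‖Complex.exp (z * x)‖ ≤ Real.exp (-β * x) := by
  rw [Complex.norm_exp, Complex.re_mul_ofReal]
  exact Real.exp_le_exp.mpr (mul_le_mul_of_nonneg_right hz hx)

lemma eH2Norm_mul_le {φ f : ℂ → ℂ} {K : ℝ} (hφ : ∀ p, ‖φ p‖ ≤ K) :
    eH2Norm (fun p => φ p * f p) ≤ ENNReal.ofReal K * eH2Norm f := by
  simp only [eH2Norm, ENNReal.mul_iSup]
  refine iSup₂_mono fun k _ => eLpNorm_le_mul_eLpNorm_of_ae_le_mul
    (Eventually.of_forall fun ω => ?_) 2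
  rw [norm_mul]
  exact mul_le_mul_of_nonneg_right (hφ _) (norm_nonneg _)

lemma lintegral_Ioi_ofReal_exp_neg_mul {β : ℝ} (hβ : 0 < β) :
    ∫⁻ x in Ioi (0 : ℝ), ENNReal.ofReal (Real.exp (-β * x)) = ENNReal.ofReal β⁻¹ := by
  rw [← ofReal_integral_eq_lintegral_ofReal (exp_neg_integrableOn_Ioi 0 hβ)
    (Eventually.of_forall fun _ => (Real.exp_pos _).le),
    integral_exp_mul_Ioi (neg_lt_zero.mpr hβ)]
  simp

lemma lintegral_Ioi_sq_rpow_half_le {F : ℝ → ℝ≥0∞} {K β : ℝ} {N : ℝ≥0∞} (hK : 0 ≤ K)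
    (hβ : 0 < β) (hF : ∀ x > 0, F x ≤ ENNReal.ofReal (K * Real.exp (-β * x)) * N) :
    (∫⁻ x in Ioi (0 : ℝ), F x ^ 2) ^ (1/2 : ℝ) ≤ ENNReal.ofReal (K / √(2 * β)) * N := by
  have hsq : ∀ x > 0, F x ^ 2 ≤ ENNReal.ofReal (K ^ 2) *
      ENNReal.ofReal (Real.exp (-(2 * β) * x)) * N ^ 2 := fun x hx => by
    calc F x ^ 2 ≤ (ENNReal.ofReal (K * Real.exp (-β * x)) * N) ^ 2 := by gcongr; exact hF x hx
      _ = _ := by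
        rw [mul_pow, ← ENNReal.ofReal_pow (by positivity), ← ENNReal.ofReal_mul (by positivity),
          mul_pow, ← Real.exp_nat_mul]
        ring_nf
  have hint : ∫⁻ x in Ioi (0 : ℝ), F x ^ 2 ≤ ENNReal.ofReal (K / √(2 * β)) ^ 2 * N ^ 2 := by
    calc ∫⁻ x in Ioi (0 : ℝ), F x ^ 2
        ≤ ∫⁻ x in Ioi (0 : ℝ), ENNReal.ofReal (K ^ 2) *
            ENNReal.ofReal (Real.exp (-(2 * β) * x)) * N ^ 2 :=
          setLIntegral_mono' measurableSet_Ioi hsq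
      _ = ENNReal.ofReal (K ^ 2) * ENNReal.ofReal (2 * β)⁻¹ * N ^ 2 := by
        rw [lintegral_mul_const _ (by fun_prop), lintegral_const_mul _ (by fun_prop),
          lintegral_Ioi_ofReal_exp_neg_mul (by positivity)]
      _ = ENNReal.ofReal (K / √(2 * β)) ^ 2 * N ^ 2 := by
        rw [← ENNReal.ofReal_mul (by positivity), ← ENNReal.ofReal_pow (by positivity),
          div_pow, Real.sq_sqrt (by positivity), div_eq_mul_inv]
  calc (∫⁻ x in Ioi (0 : ℝ), F x ^ 2) ^ (1/2 : ℝ)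
      ≤ ((ENNReal.ofReal (K / √(2 * β)) * N) ^ 2) ^ (1/2 : ℝ) := by
        rw [mul_pow]; gcongr
    _ = ENNReal.ofReal (K / √(2 * β)) * N := by
        rw [← ENNReal.rpow_natCast, ← ENNReal.rpow_mul]; norm_num

lemma norm_exp_lam1_mul_inv_le (a b c : ℝ) {k₀ k₁ : ℝ} (hk : k₀ * k₁ ≤ 0) {x : ℝ}
    (hx : 0 ≤ x) (hδ : 0 < |k₀| + |k₁| * (b / 2)) (p : ℂ) :
    ‖Complex.exp (lam1 a b c p * x) * ((k₀ : ℂ) + k₁ * lam1 a b c p)⁻¹‖ ≤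
      (|k₀| + |k₁| * (b / 2))⁻¹ * Real.exp (-(b / 2) * x) := by
  rw [norm_mul, norm_inv, mul_comm]
  exact mul_le_mul (inv_anti₀ hδ (abs_add_abs_mul_le_norm_add_mul hk (re_lam1_le a b c p)))
    (norm_exp_mul_ofReal_le (re_lam1_le a b c p) hx) (norm_nonneg _) (by positivity)

theorem frequency_solution_L2H2_bound_general
    (a b c k0 k1 : ℝ) (hb : 0 < b)
    (hk : 0 < k0 ^ 2 + k1 ^ 2) (hkk : k0 * k1 ≤ 0) :
    ∃ C1 : ℝ, 0 ≤ C1 ∧ ∀ G : ℂ → ℂ, MemH2 G → MemH2 (fun p => p * G p) →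
      ∀ m : ℕ, m ≤ 1 →
        (∫⁻ x in Set.Ioi (0:ℝ),
            (eH2Norm (fun p => p ^ m * (Complex.exp (lam1 a b c p * (x : ℂ)) *
              ((k0 : ℂ) + (k1 : ℂ) * lam1 a b c p)⁻¹ * G p))) ^ 2) ^ (1/2 : ℝ) ≤
          ENNReal.ofReal C1 * eH2Norm (fun p => p ^ m * G p) := by
  set δ := |k0| + |k1| * (b / 2)
  have hδ : 0 < δ := by
    rcases eq_or_ne k1 0 with rfl | hk1
    · have hk0 : k0 ≠ 0 := by rintro rfl; simp at hk
      simpa [δ] using hk0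
    · have := abs_pos.mpr hk1
      positivity
  refine ⟨δ⁻¹ / √(2 * (b / 2)), by positivity, fun G _ _ m _ => ?_⟩
  refine lintegral_Ioi_sq_rpow_half_le (by positivity) (by positivity) fun x hx => ?_
  have hU : (fun p => p ^ m * (Complex.exp (lam1 a b c p * (x : ℂ)) *
      ((k0 : ℂ) + (k1 : ℂ) * lam1 a b c p)⁻¹ * G p)) = fun p =>
      Complex.exp (lam1 a b c p * x) * ((k0 : ℂ) + k1 * lam1 a b c p)⁻¹ * (p ^ m * G p) := by
    ext p; ring
  rw [hU]
  exact eH2Norm_mul_le (norm_exp_lam1_mul_inv_le a b c hkk hx.le hδ)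

/-- The frequency-domain solution `U(x,p) = e^{λ₁(p)x}(k₀ + k₁λ₁(p))⁻¹G(p)` satisfies
`(∫₀^∞ ‖p^m U(x,·)‖²_{H²} dx)^{1/2} ≤ C₁ ‖p^m G‖_{H²}` for `m = 0, 1`. -/
theorem frequency_solution_L2H2_bound
    (a b c k0 k1 : ℝ) (ha : 0 < a) (hb : 0 < b) (hmu : b ^ 2 / 4 < c)
    (hk : 0 < k0 ^ 2 + k1 ^ 2) (hkk : k0 * k1 ≤ 0) :
    ∃ C1 : ℝ, 0 ≤ C1 ∧ ∀ G : ℂ → ℂ, MemH2 G → MemH2 (fun p => p * G p) →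
      ∀ m : ℕ, m ≤ 1 →
        (∫⁻ x in Set.Ioi (0:ℝ),
            (eH2Norm (fun p => p ^ m * (Complex.exp (lam1 a b c p * (x : ℂ)) *
              ((k0 : ℂ) + (k1 : ℂ) * lam1 a b c p)⁻¹ * G p))) ^ 2) ^ (1/2 : ℝ) ≤
          ENNReal.ofReal C1 * eH2Norm (fun p => p ^ m * G p) :=
  frequency_solution_L2H2_bound_general a b c k0 k1 hb hk hkk
end
end
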